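/- Let z₁, z₂ be two distinct unit vectors in ℝ² with z₁ ≠ −z₂, and let y = −(z₁+z₂)/‖z₁+z₂‖. Then the Euclidean gradient at y of the function x ↦ (1/2)(ρ(x,z₁)² + ρ(x,z₂)²), where ρ(x,z) = arccos⟨x,z⟩, is orthogonal to the tangent space of the unit circle at y (i.e., y is a critical point of the restricted function), yet y is not the minimizer of this function over the unit circle. -/

import Mathlib

/-!
Both `y` and its antipode `-y` are equidistant from `z₁` and `z₂`, with
`⟪-y, zᵢ⟫ = ‖z₁ + z₂‖ / 2 ∈ (0, 1)`. At a point equidistant from `z₁` and `z₂` the chain rule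
makes the gradient of `f` a multiple of `z₁ + z₂`, hence of `y`, so it is normal to the circle
at `y`. But `arccos` is decreasing, so `-y` is strictly closer than `y` to both points.
-/

open RealInnerProductSpace Real

theorem Real.arccos_lt_arccos_neg {t : ℝ} (ht : 0 < t) : arccos t < arccos (-t) := by
  rw [arccos_neg]
  linarith [arccos_lt_pi_div_two.mpr ht]

theorem Real.sq_arccos_lt_sq_arccos_neg {t : ℝ} (ht : 0 < t) : arccos t ^ 2 < arccos (-t) ^ 2 :=
  pow_lt_pow_left₀ (arccos_lt_arccos_neg ht) (arccos_nonneg t) two_ne_zero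

section

variable {E : Type*} [NormedAddCommGroup E] [InnerProductSpace ℝ E]

theorem hasFDerivAt_arccos_inner_sq {y z : E} (h₀ : -1 < ⟪y, z⟫) (h₁ : ⟪y, z⟫ < 1) :
    HasFDerivAt (fun x => arccos ⟪x, z⟫ ^ 2)
      ((-(2 * arccos ⟪y, z⟫ / √(1 - ⟪y, z⟫ ^ 2))) • innerSL ℝ z) y := by
  have hd : HasDerivAt (fun s => arccos s ^ 2) (2 * arccos ⟪y, z⟫ ^ 1 * -(1 / √(1 - ⟪y, z⟫ ^ 2)))
      ⟪y, z⟫ :=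
    (hasDerivAt_arccos h₀.ne' h₁.ne).pow 2
  have hinner : HasFDerivAt (fun x => ⟪x, z⟫) (innerSL ℝ z) y :=
    (innerSL ℝ z).hasFDerivAt.congr_of_eventuallyEq
      (Filter.Eventually.of_forall fun x => real_inner_comm z x)
  refine (hd.comp_hasFDerivAt y hinner).congr_fderiv ?_
  congr 1
  ring

theorem hasGradientAt_half_arccos_sq_add [CompleteSpace E] {y z₁ z₂ : E} {t : ℝ}
    (h₁ : ⟪y, z₁⟫ = t) (h₂ : ⟪y, z₂⟫ = t) (ht₀ : -1 < t) (ht₁ : t < 1) :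
    HasGradientAt (fun x => 1 / 2 * (arccos ⟪x, z₁⟫ ^ 2 + arccos ⟪x, z₂⟫ ^ 2))
      ((-(arccos t / √(1 - t ^ 2))) • (z₁ + z₂)) y := by
  subst t
  have hF := ((hasFDerivAt_arccos_inner_sq ht₀ ht₁).add
    (hasFDerivAt_arccos_inner_sq (h₂ ▸ ht₀) (h₂ ▸ ht₁))).const_mul (1 / 2 : ℝ)
  rw [hasGradientAt_iff_hasFDerivAt]
  refine hF.congr_fderiv ?_
  ext v
  simp only [h₂, map_smul, map_add, add_apply, smul_apply, coe_innerSL_apply, smul_eq_mul,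
    InnerProductSpace.toDual_apply_apply]
  ring

theorem real_inner_inv_norm_smul_add_left {z₁ z₂ : E} (hz₁ : ‖z₁‖ = 1) (hz₂ : ‖z₂‖ = 1) :
    ⟪‖z₁ + z₂‖⁻¹ • (z₁ + z₂), z₁⟫ = ‖z₁ + z₂‖ / 2 := by
  have hsq : ‖z₁ + z₂‖ ^ 2 = 2 * ⟪z₁ + z₂, z₁⟫ := by
    rw [norm_add_sq_real, inner_add_left, real_inner_self_eq_norm_sq, real_inner_comm, hz₁, hz₂]
    ring
  rw [real_inner_smul_left]
  rcases eq_or_ne ‖z₁ + z₂‖ 0 with h | h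
  · simp [h]
  · field_simp
    linarith

theorem norm_add_lt_two_of_norm_eq_one {z₁ z₂ : E} (hz₁ : ‖z₁‖ = 1) (hz₂ : ‖z₂‖ = 1)
    (hne : z₁ ≠ z₂) : ‖z₁ + z₂‖ < 2 := by
  have hpar := parallelogram_law_with_norm ℝ z₁ z₂
  have hsub : 0 < ‖z₁ - z₂‖ := norm_pos_iff.mpr (sub_ne_zero.mpr hne)
  rw [hz₁, hz₂] at hpar
  nlinarith [norm_nonneg (z₁ + z₂)]

end

/-- On the circle `S¹ ⊂ ℝ²` with geodesic distance `ρ(x,z) = arccos⟨x,z⟩`, the point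
`y = -(z₁+z₂)/‖z₁+z₂‖` is a Karcher mean of `{z₁, z₂}` with weights `(1/2, 1/2)`
(the Euclidean gradient of the variance functional at `y` is orthogonal to the
tangent space of the circle at `y`), but it is not the minimizer over the circle. -/
theorem karcher_mean_not_barycenter_circle
    (z₁ z₂ : EuclideanSpace ℝ (Fin 2))
    (hz₁ : ‖z₁‖ = 1) (hz₂ : ‖z₂‖ = 1) (hne : z₁ ≠ z₂) (hnopp : z₁ ≠ -z₂)
    (f : EuclideanSpace ℝ (Fin 2) → ℝ)
    (hf : f = fun x => (1 / 2) * ((Real.arccos ⟪x, z₁⟫) ^ 2 + (Real.arccos ⟪x, z₂⟫) ^ 2))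
    (y : EuclideanSpace ℝ (Fin 2))
    (hy : y = -(‖z₁ + z₂‖⁻¹ • (z₁ + z₂))) :
    (∀ v : EuclideanSpace ℝ (Fin 2), ⟪v, y⟫ = 0 → ⟪gradient f y, v⟫ = 0) ∧
      ∃ x : EuclideanSpace ℝ (Fin 2), ‖x‖ = 1 ∧ f x < f y := by
  have hs : z₁ + z₂ ≠ 0 := fun h => hnopp (eq_neg_of_add_eq_zero_left h)
  have hs_pos : 0 < ‖z₁ + z₂‖ := norm_pos_iff.mpr hs
  have hs_lt : ‖z₁ + z₂‖ < 2 := norm_add_lt_two_of_norm_eq_one hz₁ hz₂ hne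
  set x := ‖z₁ + z₂‖⁻¹ • (z₁ + z₂)
  have hx₁ : ⟪x, z₁⟫ = ‖z₁ + z₂‖ / 2 := real_inner_inv_norm_smul_add_left hz₁ hz₂
  have hx₂ : ⟪x, z₂⟫ = ‖z₁ + z₂‖ / 2 := by
    simpa only [add_comm z₂] using real_inner_inv_norm_smul_add_left hz₂ hz₁
  have hy₁ : ⟪y, z₁⟫ = -(‖z₁ + z₂‖ / 2) := by rw [hy, inner_neg_left, hx₁]
  have hy₂ : ⟪y, z₂⟫ = -(‖z₁ + z₂‖ / 2) := by rw [hy, inner_neg_left, hx₂]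
  subst hf
  refine ⟨fun v hv => ?_, x, norm_smul_inv_norm hs, ?_⟩
  · have hsv : ⟪z₁ + z₂, v⟫ = 0 := by
      rw [hy, inner_neg_right, real_inner_smul_right, neg_eq_zero, real_inner_comm] at hv
      exact (mul_eq_zero.mp hv).resolve_left (inv_ne_zero hs_pos.ne')
    rw [(hasGradientAt_half_arccos_sq_add hy₁ hy₂ (by linarith) (by linarith)).gradient,
      real_inner_smul_left, hsv, mul_zero]
  · have hcloser := sq_arccos_lt_sq_arccos_neg (half_pos hs_pos)
    simp only [hx₁, hx₂, hy₁, hy₂]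
    linarith
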